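/- There exists a positive integer N₀ such that for every integer n ≥ N₀ whose binary representation has exactly k digits of which at most 0.54·k are ones, the following holds: if a is a positive integer with 1 ≤ a ≤ n/2 and f(n) = f(a) + f(n − a), then a ≤ 2·n^{0.342}. -/

import Mathlib

/-!
An expression with `k` ones evaluates to at most `3^(k/3)`, i.e. `m³ ≤ 3^f(m)`, while Horner's
scheme in base 2 gives `f(n) ≤ 2·(number of digits) + (number of ones) ≤ 2.54 (log₂ n + 1)`.
If `f(n) = f(a) + f(n - a)` with `a ≤ n/2`, then
`(a · n/2)³ ≤ (a (n - a))³ ≤ 3^f(a) 3^f(n-a) = 3^f(n)`, so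
`log a ≤ log 2 + f(n) log 3 / 3 - log n`, and `f(n) log 3 / 3 ≤ (2.54 log₂ 3 / 3) log n + O(1)`
with `2.54 log₂ 3 / 3 ≈ 1.34195 < 1.342`; the slack absorbs the `O(1)` for large `n`.
-/

/-- `CanRepr n k` means the positive integer `n` can be built from exactly `k` ones
using additions and multiplications. -/
inductive CanRepr : ℕ → ℕ → Prop
  | one : CanRepr 1 1
  | add : ∀ {a b j k : ℕ}, CanRepr a j → CanRepr b k → CanRepr (a + b) (j + k)
  | mul : ∀ {a b j k : ℕ}, CanRepr a j → CanRepr b k → CanRepr (a * b) (j + k)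

/-- The integer complexity `f(n)`: the least number of 1's needed to express `n`
using 1's, `+`, `*`, and parentheses. -/
noncomputable def complexity (n : ℕ) : ℕ := sInf {k | CanRepr n k}

noncomputable def cubeRootThree : ℝ := 3 ^ (3⁻¹ : ℝ)

lemma cubeRootThree_pos : 0 < cubeRootThree := by
  unfold cubeRootThree; positivity

lemma cubeRootThree_pow_three : cubeRootThree ^ 3 = 3 := by
  unfold cubeRootThree
  exact_mod_cast Real.rpow_inv_natCast_pow (x := 3) (n := 3) (by norm_num) (by norm_num)

-- `1.42` is chosen so that `1.42² > 2`.
lemma le_cubeRootThree : (71 / 50 : ℝ) ≤ cubeRootThree :=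
  le_of_pow_le_pow_left₀ (n := 3) (by norm_num) cubeRootThree_pos.le
    (by rw [cubeRootThree_pow_three]; norm_num)

lemma one_add_div_three_le_cubeRootThree_pow (j : ℕ) :
    1 + (j : ℝ) / 3 ≤ cubeRootThree ^ j := by
  have bernoulli := one_add_mul_le_pow (a := cubeRootThree - 1) (by linarith [le_cubeRootThree]) j
  rw [add_sub_cancel] at bernoulli
  nlinarith [le_cubeRootThree, (j.cast_nonneg : (0 : ℝ) ≤ j)]

lemma three_le_cubeRootThree_pow {k : ℕ} (hk : 3 ≤ k) : 3 ≤ cubeRootThree ^ k := by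
  obtain ⟨m, rfl⟩ := Nat.exists_eq_add_of_le hk
  rw [pow_add, cubeRootThree_pow_three]
  have := one_le_pow₀ (n := m) (by linarith [le_cubeRootThree] : 1 ≤ cubeRootThree)
  linarith

lemma le_cubeRootThree_pow_of_le_four {m : ℕ} (h2 : 2 ≤ m) (h4 : m ≤ 4) :
    (m : ℝ) ≤ cubeRootThree ^ m := by
  have hc := le_cubeRootThree
  have h3 := cubeRootThree_pow_three
  interval_cases m <;> norm_num <;> nlinarith

namespace CanRepr

lemma pos {n k : ℕ} (h : CanRepr n k) : 0 < n ∧ 0 < k := by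
  induction h with
  | one => simp
  | add _ _ ih₁ ih₂ => omega
  | mul _ _ ih₁ ih₂ => exact ⟨Nat.mul_pos ih₁.1 ih₂.1, by omega⟩

lemma le_of_le_two {n k : ℕ} (h : CanRepr n k) (hk : k ≤ 2) : n ≤ k := by
  induction h with
  | one => exact le_rfl
  | add ha hb ih₁ ih₂ =>
    have := ha.pos; have := hb.pos
    have := ih₁ (by omega); have := ih₂ (by omega)
    omega
  | @mul x y j k ha hb ih₁ ih₂ =>
    have := ha.pos; have := hb.pos
    have hx : x ≤ 1 := by have := ih₁ (by omega); omega
    have hy : y ≤ 1 := by have := ih₂ (by omega); omega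
    have := Nat.mul_le_mul hx hy
    omega

lemma add_le_cubeRootThree_pow {x y j k : ℕ} (hx : CanRepr x j) (hy : CanRepr y k)
    (hxj : (x : ℝ) ≤ cubeRootThree ^ j) (hyk : (y : ℝ) ≤ cubeRootThree ^ k) :
    ((x + y : ℕ) : ℝ) ≤ cubeRootThree ^ (j + k) := by
  wlog hjk : j ≤ k generalizing x y j k
  · rw [add_comm x, add_comm j]
    exact this hy hx hyk hxj (by omega)
  have := hx.pos; have := hy.pos
  rw [pow_add, Nat.cast_add]
  rcases le_or_gt k 2 with hk | hk
  · have hxy : ((x + y : ℕ) : ℝ) ≤ ((j + k : ℕ) : ℝ) := by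
      exact_mod_cast Nat.add_le_add (hx.le_of_le_two (by omega)) (hy.le_of_le_two hk)
    push_cast at hxy
    rw [← pow_add]
    have := le_cubeRootThree_pow_of_le_four (m := j + k) (by omega) (by omega)
    push_cast at this
    linarith
  have hT := three_le_cubeRootThree_pow hk
  rcases le_or_gt j 2 with hj | hj
  · -- `x ≤ j ≤ 3 (c^j - 1) ≤ (c^j - 1) c^k`
    have hxj' : (x : ℝ) ≤ j := by exact_mod_cast hx.le_of_le_two hj
    nlinarith [one_add_div_three_le_cubeRootThree_pow j]
  · nlinarith [three_le_cubeRootThree_pow hj]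

lemma le_cubeRootThree_pow {n k : ℕ} (h : CanRepr n k) : (n : ℝ) ≤ cubeRootThree ^ k := by
  induction h with
  | one => simpa using le_cubeRootThree.trans' (by norm_num)
  | add ha hb ih₁ ih₂ => exact add_le_cubeRootThree_pow ha hb ih₁ ih₂
  | mul _ _ ih₁ ih₂ =>
    rw [Nat.cast_mul, pow_add]
    exact mul_le_mul ih₁ ih₂ (by positivity) (pow_pos cubeRootThree_pos _).le

lemma pow_three_le {n k : ℕ} (h : CanRepr n k) : n ^ 3 ≤ 3 ^ k := by
  have := pow_le_pow_left₀ (by positivity) h.le_cubeRootThree_pow 3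
  rw [← pow_mul, mul_comm, pow_mul, cubeRootThree_pow_three] at this
  exact_mod_cast this

lemma exists_le_binary {n : ℕ} (hn : 0 < n) :
    ∃ k, CanRepr n k ∧ k ≤ 2 * (Nat.digits 2 n).length + (Nat.digits 2 n).count 1 := by
  induction n using Nat.strong_induction_on with
  | _ n ih =>
  rcases Nat.lt_or_ge n 2 with hn2 | hn2
  · obtain rfl : n = 1 := by omega
    exact ⟨1, .one, by norm_num⟩
  obtain ⟨k, hk, hk_le⟩ := ih (n / 2) (by omega) (by omega)
  have two_mul : CanRepr (2 * (n / 2)) (2 + k) := .mul (.add .one .one) hk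
  rw [Nat.digits_def' (by norm_num) hn]
  rcases Nat.mod_two_eq_zero_or_one n with hr | hr
  · refine ⟨2 + k, by rwa [show 2 * (n / 2) = n by omega] at two_mul, ?_⟩
    simp only [hr, List.length_cons, List.count_cons]
    omega
  · refine ⟨2 + k + 1, by simpa [show 2 * (n / 2) + 1 = n by omega] using two_mul.add .one, ?_⟩
    simp only [hr, List.length_cons, List.count_cons, beq_self_eq_true, if_true]
    omega

end CanRepr

lemma canRepr_complexity {n : ℕ} (hn : 0 < n) : CanRepr n (complexity n) :=
  Nat.sInf_mem ((CanRepr.exists_le_binary hn).imp fun _ h => h.1)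

lemma complexity_le {n k : ℕ} (h : CanRepr n k) : complexity n ≤ k := Nat.sInf_le h

lemma complexity_le_binary {n : ℕ} (hn : 0 < n) :
    complexity n ≤ 2 * (Nat.digits 2 n).length + (Nat.digits 2 n).count 1 :=
  let ⟨_, hk, hk_le⟩ := CanRepr.exists_le_binary hn
  (complexity_le hk).trans hk_le

lemma complexity_le_of_count_one_le {n : ℕ} (hn : 0 < n)
    (hones : ((Nat.digits 2 n).count 1 : ℝ) ≤ 0.54 * ((Nat.digits 2 n).length : ℝ)) :
    (complexity n : ℝ) ≤ 2.54 * (Nat.log 2 n + 1) := by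
  have hF : (complexity n : ℝ) ≤ 2 * (Nat.digits 2 n).length + (Nat.digits 2 n).count 1 := by
    exact_mod_cast complexity_le_binary hn
  rw [Nat.length_digits 2 n (by norm_num) hn.ne', Nat.cast_add_one] at hF hones
  linarith

lemma mul_sub_pow_three_le_of_complexity_eq {n a : ℕ} (ha : 0 < a) (han : a < n)
    (h : complexity n = complexity a + complexity (n - a)) :
    (a * (n - a)) ^ 3 ≤ 3 ^ complexity n := by
  rw [h, mul_pow, pow_add]
  exact Nat.mul_le_mul (canRepr_complexity ha).pow_three_le
    (canRepr_complexity (by omega)).pow_three_le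

lemma mul_half_pow_three_le_of_complexity_eq {n a : ℕ} (ha : 0 < a) (ha_le : (a : ℝ) ≤ n / 2)
    (h : complexity n = complexity a + complexity (n - a)) :
    ((a : ℝ) * (n / 2)) ^ 3 ≤ 3 ^ complexity n := by
  have haR : (0 : ℝ) < a := by exact_mod_cast ha
  have han : a < n := by exact_mod_cast (show (a : ℝ) < n by linarith)
  have hsub : (n : ℝ) / 2 ≤ (n : ℝ) - a := by linarith
  calc ((a : ℝ) * (n / 2)) ^ 3 ≤ ((a * (n - a) : ℕ) : ℝ) ^ 3 := by
        push_cast [han.le]; gcongr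
    _ ≤ 3 ^ complexity n := by exact_mod_cast mul_sub_pow_three_le_of_complexity_eq ha han h

lemma complexity_mul_log_three_le {n : ℕ} (hn : 2 ^ 21000 ≤ n)
    (hones : ((Nat.digits 2 n).count 1 : ℝ) ≤ 0.54 * ((Nat.digits 2 n).length : ℝ)) :
    complexity n * Real.log 3 ≤ 4.026 * Real.log n := by
  have hn0 : 0 < n := lt_of_lt_of_le (by positivity) hn
  have hF := complexity_le_of_count_one_le hn0 hones
  set L := Nat.log 2 n
  have hL : (21000 : ℝ) ≤ L := by exact_mod_cast Nat.le_log_of_pow_le (by norm_num) hn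
  have hLn : L * Real.log 2 ≤ Real.log n := by
    rw [← Real.log_pow]
    exact Real.log_le_log (by positivity) (by exact_mod_cast Nat.pow_log_le_self 2 hn0.ne')
  -- `2.54 log 3 < 4.026 log 2`, with enough room to absorb the `+ 1` once `L ≥ 21000`
  nlinarith [mul_le_mul_of_nonneg_right hF (Real.log_pos (by norm_num : (1 : ℝ) < 3)).le,
    mul_le_mul_of_nonneg_left Real.log_three_lt_d9.le (by positivity : (0 : ℝ) ≤ L + 1),
    mul_le_mul_of_nonneg_left Real.log_two_gt_d9.le (by positivity : (0 : ℝ) ≤ L)]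

theorem stmt_13 : ∃ N₀ : ℕ, 0 < N₀ ∧ ∀ n : ℕ, N₀ ≤ n →
    ((Nat.digits 2 n).count 1 : ℝ) ≤ 0.54 * ((Nat.digits 2 n).length : ℝ) →
    ∀ a : ℕ, 1 ≤ a → (a : ℝ) ≤ (n : ℝ) / 2 →
      complexity n = complexity a + complexity (n - a) →
      (a : ℝ) ≤ 2 * (n : ℝ) ^ ((0.342 : ℝ)) := by
  refine ⟨2 ^ 21000, by positivity, fun n hn hones a ha ha_le heq => ?_⟩
  have haR : (0 : ℝ) < a := by exact_mod_cast ha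
  have hnR : (0 : ℝ) < n := by linarith
  have hlog := Real.log_le_log (by positivity) (mul_half_pow_three_le_of_complexity_eq ha ha_le heq)
  rw [Real.log_pow, Real.log_pow, Real.log_mul haR.ne' (by positivity),
    Real.log_div hnR.ne' two_ne_zero, Nat.cast_ofNat] at hlog
  rw [← Real.log_le_log_iff haR (by positivity), Real.log_mul two_ne_zero (by positivity),
    Real.log_rpow hnR]
  linarith [complexity_mul_log_three_le hn hones]
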